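/- arXiv:2509.12756 — 4 statements merged into one kernel-verified Lean document; each statement's English description precedes it below -/
import Mathlib

section
/- For every even integer m ≥ 2, the number of subsets S of {1, 2, ..., m} of size m/2 + 1 such that 1 ∈ S, m ∈ S, and the complement of S contains no two consecutive integers, equals m/2. -/
/-- The candidate sets: odd numbers below `2*a` together with even numbers at least `2*a`. -/
def gs (m a : ℕ) : Finset ℕ := (Finset.Icc 1 m).filter (fun i => i % 2 = 1 ↔ i < 2*a)

lemma mem_gs {m a i : ℕ} : i ∈ gs m a ↔ (1 ≤ i ∧ i ≤ m) ∧ (i % 2 = 1 ↔ i < 2*a) := by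
  simp [gs, Finset.mem_filter, Finset.mem_Icc]

lemma gs_card {k a : ℕ} (ha1 : 1 ≤ a) (hak : a ≤ k) : (gs (2*k) a).card = k + 1 := by
  have himg : gs (2*k) a
      = (Finset.range (k+1)).image (fun t => if t < a then 2*t+1 else 2*t) := by
    ext i
    simp only [mem_gs, Finset.mem_image, Finset.mem_range]
    constructor
    · rintro ⟨⟨h1, h2⟩, h3⟩
      refine ⟨i/2, by omega, ?_⟩
      show (if i/2 < a then 2*(i/2)+1 else 2*(i/2)) = i
      split_ifs with h <;> omega
    · rintro ⟨t, ht, rfl⟩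
      split_ifs with h <;> omega
  rw [himg, Finset.card_image_of_injOn, Finset.card_range]
  intro s hs t ht h
  simp only [Finset.coe_range, Set.mem_Iio] at hs ht
  dsimp only at h
  split_ifs at h <;> omega

lemma gs_inj {k : ℕ} : Set.InjOn (gs (2*k)) ↑(Finset.Icc 1 k) := by
  intro a ha b hb h
  simp only [Finset.coe_Icc, Set.mem_Icc] at ha hb
  have h2a : 2*a ∈ gs (2*k) a := mem_gs.mpr (by omega)
  have h2b : 2*b ∈ gs (2*k) b := mem_gs.mpr (by omega)
  rw [h] at h2a
  rw [← h] at h2b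
  rw [mem_gs] at h2a h2b
  omega

lemma gs_good {k a : ℕ} (hk : 1 ≤ k) (ha1 : 1 ≤ a) (hak : a ≤ k) :
    gs (2*k) a ⊆ Finset.Icc 1 (2*k) ∧ (gs (2*k) a).card = k + 1 ∧ 1 ∈ gs (2*k) a ∧
      2*k ∈ gs (2*k) a ∧
      ∀ i ∈ Finset.Icc 1 (2*k) \ gs (2*k) a, i + 1 ∉ Finset.Icc 1 (2*k) \ gs (2*k) a := by
  refine ⟨Finset.filter_subset _ _, gs_card ha1 hak, mem_gs.mpr (by omega),
    mem_gs.mpr (by omega), ?_⟩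
  intro i hi hcon
  rw [Finset.mem_sdiff, Finset.mem_Icc, mem_gs] at hi hcon
  omega

lemma gs_eq_of_keys {k a : ℕ} {S T : Finset ℕ} (hk : 1 ≤ k) (ha1 : 1 ≤ a) (hak : a ≤ k)
    (hsub : S ⊆ Finset.Icc 1 (2*k)) (h1 : 1 ∈ S) (hm' : 2*k ∈ S)
    (hTdef : T = Finset.Icc 1 (2*k) \ S)
    (keyodd : ∀ j, 1 ≤ j → j ≤ k-1 → (2*j+1 ∈ T ↔ a ≤ j))
    (keyeven : ∀ j, 1 ≤ j → j ≤ k-1 → (2*j ∈ T ↔ j < a)) :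
    S = gs (2*k) a := by
  have memT : ∀ i, i ∈ T ↔ (1 ≤ i ∧ i ≤ 2*k) ∧ i ∉ S := by
    intro i; simp [hTdef, Finset.mem_sdiff, Finset.mem_Icc]
  have h1T : (1 : ℕ) ∉ T := fun h => ((memT 1).mp h).2 h1
  have hmT : 2*k ∉ T := fun h => ((memT (2*k)).mp h).2 hm'
  have hTmem : ∀ i, 1 ≤ i → i ≤ 2*k → (i ∈ T ↔ ¬(i % 2 = 1 ↔ i < 2*a)) := by
    intro i hi1 hi2
    rcases Nat.even_or_odd i with ⟨j, hj⟩ | ⟨j, hj⟩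
    · have hij : i = 2*j := by omega
      subst hij
      by_cases hjk : j ≤ k - 1
      · rw [keyeven j (by omega) hjk]; omega
      · have hjk' : j = k := by omega
        rw [hjk']
        constructor
        · intro h; exact absurd h hmT
        · intro h; exact absurd (show 2*k % 2 = 1 ↔ 2*k < 2*a by omega) h
    · have hij : i = 2*j+1 := by omega
      subst hij
      by_cases hj0 : j = 0
      · constructor
        · intro h
          rw [hj0] at h
          norm_num at h
          exact absurd h h1T
        · intro h
          exact absurd (show (2*j+1) % 2 = 1 ↔ 2*j+1 < 2*a by omega) h
      · have hjk : j ≤ k-1 := by omega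
        rw [keyodd j (by omega) hjk]; omega
  ext i
  rw [mem_gs]
  by_cases hi : 1 ≤ i ∧ i ≤ 2*k
  · have hiff := hTmem i hi.1 hi.2
    rw [memT i] at hiff
    constructor
    · intro hiS
      refine ⟨hi, ?_⟩
      by_contra hcon
      exact (hiff.mpr hcon).2 hiS
    · rintro ⟨-, h⟩
      by_contra hiS
      exact (hiff.mp ⟨hi, hiS⟩) h
  · constructor
    · intro hiS
      exact absurd (Finset.mem_Icc.mp (hsub hiS)) hi
    · rintro ⟨h, -⟩
      exact absurd h hi

lemma gs_surj {k : ℕ} (hk : 1 ≤ k) {S : Finset ℕ}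
    (hsub : S ⊆ Finset.Icc 1 (2*k)) (hcard : S.card = k + 1)
    (h1 : 1 ∈ S) (hm' : 2*k ∈ S)
    (hnc : ∀ i ∈ Finset.Icc 1 (2*k) \ S, i + 1 ∉ Finset.Icc 1 (2*k) \ S) :
    ∃ a, 1 ≤ a ∧ a ≤ k ∧ S = gs (2*k) a := by
  set T := Finset.Icc 1 (2*k) \ S with hT
  have memT : ∀ i, i ∈ T ↔ (1 ≤ i ∧ i ≤ 2*k) ∧ i ∉ S := by
    intro i; simp [hT, Finset.mem_sdiff, Finset.mem_Icc, and_assoc]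
  have hnc' : ∀ i, i ∈ T → i + 1 ∉ T := fun i hi => hnc i hi
  have hTcard : T.card = k - 1 := by
    rw [hT, Finset.card_sdiff_of_subset hsub, Nat.card_Icc, hcard]
    omega
  have h1T : (1 : ℕ) ∉ T := fun h => ((memT 1).mp h).2 h1
  have hmT : 2*k ∉ T := fun h => ((memT (2*k)).mp h).2 hm'
  -- partition T into the pairs {2j, 2j+1}, j = 1 .. k-1
  have hpart : T = (Finset.Icc 1 (k-1)).biUnion (fun j => T ∩ {2*j, 2*j+1}) := by
    ext i
    simp only [Finset.mem_biUnion, Finset.mem_inter, Finset.mem_insert,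
      Finset.mem_singleton, Finset.mem_Icc]
    constructor
    · intro hiT
      have hi := (memT i).mp hiT
      have hne1 : i ≠ 1 := by rintro rfl; exact h1T hiT
      have hnem : i ≠ 2*k := by rintro rfl; exact hmT hiT
      exact ⟨i/2, by omega, hiT, by omega⟩
    · rintro ⟨j, _, hiT, _⟩; exact hiT
  have hdisj : ∀ x ∈ Finset.Icc 1 (k-1), ∀ y ∈ Finset.Icc 1 (k-1), x ≠ y →
      Disjoint (T ∩ {2*x, 2*x+1}) (T ∩ {2*y, 2*y+1}) := by
    intro x _ y _ hxy
    rw [Finset.disjoint_left]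
    intro i hi hi'
    simp only [Finset.mem_inter, Finset.mem_insert, Finset.mem_singleton] at hi hi'
    omega
  have hsum : ∑ j ∈ Finset.Icc 1 (k-1), (T ∩ {2*j, 2*j+1}).card = k - 1 := by
    rw [← Finset.card_biUnion hdisj, ← hpart, hTcard]
  have hle1 : ∀ j ∈ Finset.Icc 1 (k-1), (T ∩ {2*j, 2*j+1}).card ≤ 1 := by
    intro j hj
    rw [Finset.card_le_one]
    intro x hx y hy
    simp only [Finset.mem_inter, Finset.mem_insert, Finset.mem_singleton] at hx hy
    by_contra hne
    have hboth : 2*j ∈ T ∧ 2*j+1 ∈ T := by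
      rcases hx.2 with rfl | rfl <;> rcases hy.2 with rfl | rfl <;>
        first
        | omega
        | exact ⟨hx.1, hy.1⟩
        | exact ⟨hy.1, hx.1⟩
    exact hnc' (2*j) hboth.1 hboth.2
  have heq1 : ∀ j ∈ Finset.Icc 1 (k-1), (T ∩ {2*j, 2*j+1}).card = 1 := by
    intro j hj
    by_contra hne
    have hlt : ∑ j' ∈ Finset.Icc 1 (k-1), (T ∩ {2*j', 2*j'+1}).card
        < ∑ _j' ∈ Finset.Icc 1 (k-1), 1 :=
      Finset.sum_lt_sum hle1 ⟨j, hj, by have := hle1 j hj; omega⟩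
    rw [Finset.sum_const, smul_eq_mul, mul_one, Nat.card_Icc] at hlt
    omega
  have hxor : ∀ j, 1 ≤ j → j ≤ k-1 →
      ((2*j ∈ T ∧ 2*j+1 ∉ T) ∨ (2*j ∉ T ∧ 2*j+1 ∈ T)) := by
    intro j h1j hjk
    have hc := heq1 j (Finset.mem_Icc.mpr ⟨h1j, hjk⟩)
    have hnon : (T ∩ {2*j, 2*j+1}).Nonempty := Finset.card_pos.mp (by omega)
    obtain ⟨x, hx⟩ := hnon
    simp only [Finset.mem_inter, Finset.mem_insert, Finset.mem_singleton] at hx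
    rcases hx.2 with rfl | rfl
    · exact Or.inl ⟨hx.1, fun h => hnc' _ hx.1 h⟩
    · refine Or.inr ⟨fun h => hnc' _ h hx.1, hx.1⟩
  have hmono : ∀ j, 1 ≤ j → 2*j+1 ∈ T → ∀ j', j ≤ j' → j' ≤ k-1 → 2*j'+1 ∈ T := by
    intro j h1j hjT j' hjj'
    induction j', hjj' using Nat.le_induction with
    | base => intro _; exact hjT
    | succ n hn ih =>
      intro hnk
      have hT2n1 : 2*n+1 ∈ T := ih (by omega)
      have hnotT : 2*n+2 ∉ T := hnc' _ hT2n1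
      rcases hxor (n+1) (by omega) hnk with ⟨h, _⟩ | ⟨_, h⟩
      · rw [show 2*(n+1) = 2*n+2 from by ring] at h
        exact absurd h hnotT
      · rwa [show 2*(n+1) = 2*n+2 from by ring] at h
  -- define the threshold a
  by_cases hex : ∃ j ∈ Finset.Icc 1 (k-1), 2*j+1 ∈ T
  · set F := (Finset.Icc 1 (k-1)).filter (fun j => 2*j+1 ∈ T) with hF
    have hFne : F.Nonempty := by
      obtain ⟨j, hj, hjT⟩ := hex
      exact ⟨j, Finset.mem_filter.mpr ⟨hj, hjT⟩⟩
    set a := F.min' hFne with ha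
    have haF : a ∈ F := F.min'_mem hFne
    rw [hF, Finset.mem_filter, Finset.mem_Icc] at haF
    have ha1 : 1 ≤ a := haF.1.1
    have hak : a ≤ k := by omega
    have keyodd : ∀ j, 1 ≤ j → j ≤ k-1 → (2*j+1 ∈ T ↔ a ≤ j) := by
      intro j h1j hjk
      constructor
      · intro hjT
        exact F.min'_le j (Finset.mem_filter.mpr ⟨Finset.mem_Icc.mpr ⟨h1j, hjk⟩, hjT⟩)
      · intro haj
        exact hmono a ha1 haF.2 j haj hjk
    have keyeven : ∀ j, 1 ≤ j → j ≤ k-1 → (2*j ∈ T ↔ j < a) := by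
      intro j h1j hjk
      have hodd := keyodd j h1j hjk
      rcases hxor j h1j hjk with ⟨h, h'⟩ | ⟨h, h'⟩
      · have hja : ¬ a ≤ j := fun hle => h' (hodd.mpr hle)
        exact ⟨fun _ => by omega, fun _ => h⟩
      · have hja : a ≤ j := hodd.mp h'
        exact ⟨fun hh => absurd hh h, fun hh => absurd hja (by omega)⟩
    refine ⟨a, ha1, hak, ?_⟩
    · exact gs_eq_of_keys hk ha1 hak hsub h1 hm' hT keyodd keyeven
  · push_neg at hex
    have keyodd : ∀ j, 1 ≤ j → j ≤ k-1 → (2*j+1 ∈ T ↔ k ≤ j) := by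
      intro j h1j hjk
      constructor
      · intro hjT
        exact absurd hjT (hex j (Finset.mem_Icc.mpr ⟨h1j, hjk⟩))
      · intro h; omega
    have keyeven : ∀ j, 1 ≤ j → j ≤ k-1 → (2*j ∈ T ↔ j < k) := by
      intro j h1j hjk
      constructor
      · intro _; omega
      · intro _
        rcases hxor j h1j hjk with ⟨h, _⟩ | ⟨_, h⟩
        · exact h
        · exact absurd h (hex j (Finset.mem_Icc.mpr ⟨h1j, hjk⟩))
    exact ⟨k, hk, le_refl k, gs_eq_of_keys hk hk (le_refl k) hsub h1 hm' hT
      keyodd keyeven⟩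

theorem stmt_0 (m : ℕ) (hm : 2 ≤ m) (hme : Even m) :
    ((Finset.Icc 1 m).powerset.filter (fun S =>
      S.card = m / 2 + 1 ∧ 1 ∈ S ∧ m ∈ S ∧
      ∀ i ∈ Finset.Icc 1 m \ S, i + 1 ∉ Finset.Icc 1 m \ S)).card = m / 2 := by
  obtain ⟨k, rfl⟩ := hme
  have hk1 : 1 ≤ k := by omega
  simp only [show k + k = 2 * k from (two_mul k).symm,
    show 2 * k / 2 = k from by omega]
  have himg : (Finset.Icc 1 (2*k)).powerset.filter (fun S =>
      S.card = k + 1 ∧ 1 ∈ S ∧ 2*k ∈ S ∧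
      ∀ i ∈ Finset.Icc 1 (2*k) \ S, i + 1 ∉ Finset.Icc 1 (2*k) \ S)
      = (Finset.Icc 1 k).image (gs (2*k)) := by
    ext S
    simp only [Finset.mem_filter, Finset.mem_powerset, Finset.mem_image, Finset.mem_Icc]
    constructor
    · rintro ⟨hsub, hcard, h1, hm', hnc⟩
      obtain ⟨a, ha1, hak, rfl⟩ := gs_surj hk1 hsub hcard h1 hm' hnc
      exact ⟨a, ⟨ha1, hak⟩, rfl⟩
    · rintro ⟨a, ⟨ha1, hak⟩, rfl⟩
      obtain ⟨g1, g2, g3, g4, g5⟩ := gs_good hk1 ha1 hak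
      exact ⟨g1, g2, g3, g4, g5⟩
  rw [himg, Finset.card_image_of_injOn gs_inj, Nat.card_Icc]
  omega
end

section
/- The number of words of length n over the alphabet {1, 2, 3} that contain at least one occurrence of the adjacent factor 13 or of the adjacent factor 31 equals 3^n - u_n, where u_n is defined by u_0 = 1, u_1 = 3, u_n = 2 u_{n-1} + u_{n-2}. -/
/-- A ternary word (letters `0,1,2` standing for `1,2,3`) contains the adjacent
factor `13` or the adjacent factor `31`. -/
def ContainsFactor (n : ℕ) (w : Fin n → Fin 3) : Prop :=
  ∃ i : Fin n, ∃ h : (i : ℕ) + 1 < n,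
    (w i = 0 ∧ w ⟨(i : ℕ) + 1, h⟩ = 2) ∨ (w i = 2 ∧ w ⟨(i : ℕ) + 1, h⟩ = 0)

instance (n : ℕ) : DecidablePred (ContainsFactor n) := fun _ => by
  unfold ContainsFactor; infer_instance

/-- The sequence counting ternary words avoiding both factors `13` and `31`:
`u 0 = 1`, `u 1 = 3`, `u (n+2) = 2 u (n+1) + u n`. -/
def uRec : ℕ → ℕ
  | 0 => 1
  | 1 => 3
  | n + 2 => 2 * uRec (n + 1) + uRec n

/-!
A word avoids `13` and `31` exactly when every pair of adjacent letters is allowed, so the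
avoiding words are the chains of the "allowed pair" relation and can be counted by a transfer
recursion on the first letter. Let `c n a` count the avoiding words of length `n + 1` that start
with `a`. The letter `2` may be followed by anything, so `c (n + 1) 2 = u (n + 1)`, while `1` and
`3` each exclude one successor; summing over the first letter gives
`u (n + 2) = 2 u (n + 1) + c n 2 = 2 u (n + 1) + u n`.
-/

open Finset

lemma Fin.card_filter_tuple_succ {α : Type*} [Fintype α] {n : ℕ}
    (P : (Fin (n + 1) → α) → Prop) [DecidablePred P] :
    #{w | P w} = ∑ a, #{v : Fin n → α | P (Fin.cons a v)} := by
  simp only [card_filter]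
  rw [← (Fin.consEquiv fun _ => α).sum_comp, Fintype.sum_prod_type]
  rfl

section ChainCount

variable {α : Type*} [Fintype α] (R : α → α → Prop) [DecidableRel R]

def chainCount (n : ℕ) (a : α) : ℕ := #{v : Fin n → α | (a :: List.ofFn v).IsChain R}

lemma chainCount_zero (a : α) : chainCount R 0 a = 1 := by
  simp [chainCount]

lemma chainCount_succ (n : ℕ) (a : α) :
    chainCount R (n + 1) a = ∑ b with R a b, chainCount R n b := by
  rw [chainCount, Fin.card_filter_tuple_succ fun v => (a :: List.ofFn v).IsChain R, sum_filter]
  refine sum_congr rfl fun b _ => ?_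
  simp only [List.ofFn_cons, List.isChain_cons_cons]
  split_ifs with hab <;> simp [hab, chainCount]

lemma card_isChain_ofFn_succ (n : ℕ) :
    #{w : Fin (n + 1) → α | (List.ofFn w).IsChain R} = ∑ a, chainCount R n a := by
  rw [Fin.card_filter_tuple_succ fun w => (List.ofFn w).IsChain R]
  simp only [List.ofFn_cons, chainCount]

end ChainCount

def AllowedPair (a b : Fin 3) : Prop := ¬((a = 0 ∧ b = 2) ∨ (a = 2 ∧ b = 0))

instance : DecidableRel AllowedPair := fun a b => by unfold AllowedPair; infer_instance

lemma not_containsFactor_iff_isChain {n : ℕ} (w : Fin n → Fin 3) :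
    ¬ContainsFactor n w ↔ (List.ofFn w).IsChain AllowedPair := by
  simp only [ContainsFactor, List.isChain_ofFn, AllowedPair, not_exists]
  exact ⟨fun h i hi => h ⟨i, by omega⟩ hi, fun h i hi => h i hi⟩

lemma chainCount_allowedPair_succ (n : ℕ) :
    chainCount AllowedPair (n + 1) 0 = chainCount AllowedPair n 0 + chainCount AllowedPair n 1 ∧
    chainCount AllowedPair (n + 1) 1 = ∑ a, chainCount AllowedPair n a ∧
    chainCount AllowedPair (n + 1) 2 = chainCount AllowedPair n 1 + chainCount AllowedPair n 2 := by
  simp [chainCount_succ, sum_filter, Fin.sum_univ_three, AllowedPair]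

lemma chainCount_allowedPair (n : ℕ) :
    chainCount AllowedPair n 1 = uRec n ∧ ∑ a, chainCount AllowedPair n a = uRec (n + 1) := by
  induction n with
  | zero => simp [chainCount_zero, uRec]
  | succ n ih =>
    obtain ⟨h0, h1, h2⟩ := chainCount_allowedPair_succ n
    rw [Fin.sum_univ_three] at ih h1 ⊢
    rw [uRec]
    omega

lemma card_not_containsFactor (n : ℕ) :
    Fintype.card {w : Fin n → Fin 3 // ¬ContainsFactor n w} = uRec n := by
  rw [Fintype.card_subtype]
  simp_rw [not_containsFactor_iff_isChain]
  cases n with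
  | zero => rfl
  | succ n => rw [card_isChain_ofFn_succ, (chainCount_allowedPair n).2]

theorem stmt_14 (n : ℕ) :
    Fintype.card {w : Fin n → Fin 3 // ContainsFactor n w} = 3 ^ n - uRec n := by
  have hcompl := Fintype.card_subtype_compl (ContainsFactor n)
  have hle := Fintype.card_subtype_le (ContainsFactor n)
  rw [card_not_containsFactor, Fintype.card_fun, Fintype.card_fin, Fintype.card_fin] at hcompl
  rw [Fintype.card_fun, Fintype.card_fin, Fintype.card_fin] at hle
  omega
end

section
/- In the 4 × 5 grid with the power contamination propagation rules, there exists an initial set S of 3 cells whose contamination closure is the entire grid. Consequently γ_c(G(4,5)) ≤ 3 < ⌈5/2⌉ + 1 = 4, disproving the Ainouche–Bouroubi conjecture. -/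
/-- The cell `u` lies in the `n × m` grid. -/
def InGrid (n m : ℕ) (u : ℕ × ℕ) : Prop :=
  1 ≤ u.1 ∧ u.1 ≤ n ∧ 1 ≤ u.2 ∧ u.2 ≤ m

/-- Cells `v, w` are positioned according to one of the eight contamination
rules (a)–(h) with respect to the cell `u = (i, j)`. -/
def RulePair (u v w : ℕ × ℕ) : Prop :=
  (v = (u.1 - 1, u.2 - 1) ∧ w = (u.1 + 1, u.2 + 1)) ∨  -- (a)
  (v = (u.1 + 1, u.2 - 1) ∧ w = (u.1 - 1, u.2 + 1)) ∨  -- (b)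
  (v = (u.1 - 1, u.2) ∧ w = (u.1 + 1, u.2)) ∨          -- (c)
  (v = (u.1, u.2 - 1) ∧ w = (u.1, u.2 + 1)) ∨          -- (d)
  (v = (u.1, u.2 - 1) ∧ w = (u.1 - 1, u.2)) ∨          -- (e)
  (v = (u.1, u.2 - 1) ∧ w = (u.1 + 1, u.2)) ∨          -- (f)
  (v = (u.1 + 1, u.2) ∧ w = (u.1, u.2 + 1)) ∨          -- (g)
  (v = (u.1 - 1, u.2) ∧ w = (u.1, u.2 + 1))            -- (h)

/-- The contamination closure: the smallest set of cells containing `S` and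
closed under the contamination rules within the `n × m` grid. -/
inductive Contam (n m : ℕ) (S : Set (ℕ × ℕ)) : ℕ × ℕ → Prop where
  | init {u : ℕ × ℕ} : u ∈ S → Contam n m S u
  | spread {u v w : ℕ × ℕ} : InGrid n m u → InGrid n m v → InGrid n m w →
      Contam n m S v → Contam n m S w → RulePair u v w → Contam n m S u

/-- The power contamination number of the `n × m` grid. -/
noncomputable def gammaC (n m : ℕ) : ℕ :=
  sInf {c | ∃ S : Finset (ℕ × ℕ), S.card = c ∧ (∀ u ∈ S, InGrid n m u) ∧
    ∀ u, InGrid n m u → Contam n m (↑S) u}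

lemma key : ∃ S : Finset (ℕ × ℕ), S.card = 3 ∧ (∀ u ∈ S, InGrid 4 5 u) ∧
    ∀ u, InGrid 4 5 u → Contam 4 5 (↑S) u := by
  use ({(1,1),(2,3),(4,5)} : Finset (ℕ × ℕ))
  set S : Finset (ℕ × ℕ) := {(1,1),(2,3),(4,5)} with hS
  refine ⟨by decide, by intro u hu; fin_cases hu <;> norm_num [InGrid], ?_⟩
  have h11 : Contam 4 5 (↑S) (1,1) := Contam.init (by simp [S])
  have h23 : Contam 4 5 (↑S) (2,3) := Contam.init (by simp [S])
  have h45 : Contam 4 5 (↑S) (4,5) := Contam.init (by simp [S])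
  have h34 : Contam 4 5 (↑S) (3,4) :=
    Contam.spread (by norm_num [InGrid]) (by norm_num [InGrid]) (by norm_num [InGrid]) h23 h45 (Or.inl ⟨rfl, rfl⟩)
  have h35 : Contam 4 5 (↑S) (3,5) :=
    Contam.spread (by norm_num [InGrid]) (by norm_num [InGrid]) (by norm_num [InGrid]) h34 h45 (Or.inr (Or.inr (Or.inr (Or.inr (Or.inr (Or.inl ⟨rfl, rfl⟩))))))
  have h44 : Contam 4 5 (↑S) (4,4) :=
    Contam.spread (by norm_num [InGrid]) (by norm_num [InGrid]) (by norm_num [InGrid]) h34 h45 (Or.inr (Or.inr (Or.inr (Or.inr (Or.inr (Or.inr (Or.inr (⟨rfl, rfl⟩))))))))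
  have h24 : Contam 4 5 (↑S) (2,4) :=
    Contam.spread (by norm_num [InGrid]) (by norm_num [InGrid]) (by norm_num [InGrid]) h23 h34 (Or.inr (Or.inr (Or.inr (Or.inr (Or.inr (Or.inl ⟨rfl, rfl⟩))))))
  have h25 : Contam 4 5 (↑S) (2,5) :=
    Contam.spread (by norm_num [InGrid]) (by norm_num [InGrid]) (by norm_num [InGrid]) h24 h35 (Or.inr (Or.inr (Or.inr (Or.inr (Or.inr (Or.inl ⟨rfl, rfl⟩))))))
  have h33 : Contam 4 5 (↑S) (3,3) :=
    Contam.spread (by norm_num [InGrid]) (by norm_num [InGrid]) (by norm_num [InGrid]) h23 h34 (Or.inr (Or.inr (Or.inr (Or.inr (Or.inr (Or.inr (Or.inr (⟨rfl, rfl⟩))))))))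
  have h43 : Contam 4 5 (↑S) (4,3) :=
    Contam.spread (by norm_num [InGrid]) (by norm_num [InGrid]) (by norm_num [InGrid]) h33 h44 (Or.inr (Or.inr (Or.inr (Or.inr (Or.inr (Or.inr (Or.inr (⟨rfl, rfl⟩))))))))
  have h22 : Contam 4 5 (↑S) (2,2) :=
    Contam.spread (by norm_num [InGrid]) (by norm_num [InGrid]) (by norm_num [InGrid]) h11 h33 (Or.inl ⟨rfl, rfl⟩)
  have h32 : Contam 4 5 (↑S) (3,2) :=
    Contam.spread (by norm_num [InGrid]) (by norm_num [InGrid]) (by norm_num [InGrid]) h22 h33 (Or.inr (Or.inr (Or.inr (Or.inr (Or.inr (Or.inr (Or.inr (⟨rfl, rfl⟩))))))))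
  have h42 : Contam 4 5 (↑S) (4,2) :=
    Contam.spread (by norm_num [InGrid]) (by norm_num [InGrid]) (by norm_num [InGrid]) h32 h43 (Or.inr (Or.inr (Or.inr (Or.inr (Or.inr (Or.inr (Or.inr (⟨rfl, rfl⟩))))))))
  have h12 : Contam 4 5 (↑S) (1,2) :=
    Contam.spread (by norm_num [InGrid]) (by norm_num [InGrid]) (by norm_num [InGrid]) h11 h22 (Or.inr (Or.inr (Or.inr (Or.inr (Or.inr (Or.inl ⟨rfl, rfl⟩))))))
  have h13 : Contam 4 5 (↑S) (1,3) :=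
    Contam.spread (by norm_num [InGrid]) (by norm_num [InGrid]) (by norm_num [InGrid]) h12 h23 (Or.inr (Or.inr (Or.inr (Or.inr (Or.inr (Or.inl ⟨rfl, rfl⟩))))))
  have h14 : Contam 4 5 (↑S) (1,4) :=
    Contam.spread (by norm_num [InGrid]) (by norm_num [InGrid]) (by norm_num [InGrid]) h13 h24 (Or.inr (Or.inr (Or.inr (Or.inr (Or.inr (Or.inl ⟨rfl, rfl⟩))))))
  have h15 : Contam 4 5 (↑S) (1,5) :=
    Contam.spread (by norm_num [InGrid]) (by norm_num [InGrid]) (by norm_num [InGrid]) h14 h25 (Or.inr (Or.inr (Or.inr (Or.inr (Or.inr (Or.inl ⟨rfl, rfl⟩))))))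
  have h21 : Contam 4 5 (↑S) (2,1) :=
    Contam.spread (by norm_num [InGrid]) (by norm_num [InGrid]) (by norm_num [InGrid]) h11 h22 (Or.inr (Or.inr (Or.inr (Or.inr (Or.inr (Or.inr (Or.inr (⟨rfl, rfl⟩))))))))
  have h31 : Contam 4 5 (↑S) (3,1) :=
    Contam.spread (by norm_num [InGrid]) (by norm_num [InGrid]) (by norm_num [InGrid]) h21 h32 (Or.inr (Or.inr (Or.inr (Or.inr (Or.inr (Or.inr (Or.inr (⟨rfl, rfl⟩))))))))
  have h41 : Contam 4 5 (↑S) (4,1) :=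
    Contam.spread (by norm_num [InGrid]) (by norm_num [InGrid]) (by norm_num [InGrid]) h31 h42 (Or.inr (Or.inr (Or.inr (Or.inr (Or.inr (Or.inr (Or.inr (⟨rfl, rfl⟩))))))))

  rintro ⟨i, j⟩ ⟨hi1, hi2, hj1, hj2⟩
  interval_cases i <;> interval_cases j <;> assumption

theorem stmt_17 :
    (∃ S : Finset (ℕ × ℕ), S.card = 3 ∧ (∀ u ∈ S, InGrid 4 5 u) ∧
        ∀ u, InGrid 4 5 u → Contam 4 5 (↑S) u) ∧
      gammaC 4 5 ≤ 3 ∧ (3 : ℕ) < (5 + 1) / 2 + 1 := by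
  refine ⟨key, ?_, by norm_num⟩
  obtain ⟨S, hc, hg, hall⟩ := key
  exact csInf_le ⟨0, fun c hc => Nat.zero_le c⟩ ⟨S, hc, hg, hall⟩
end

section
/- In the 1 × m grid (a path on m vertices) with the power contamination rules, a set S ⊆ {1, ..., m} has contamination closure equal to the entire path if and only if 1 ∈ S, m ∈ S, and the complement of S contains no two consecutive integers. Consequently the minimum size of such a set is ⌊m/2⌋ + 1. -/
/-!
The endpoints can only be contaminated by being in `S`, and two adjacent cells outside `S` block
each other forever: neither can fire before the other.
Conversely, if no two adjacent cells are missing, every missing interior cell has both neighbours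
in `S`. For the minimum, every pair `{2k, 2k + 1}` with `k ≤ m / 2` meets such an `S`, while the
odd cells together with `m` attain the bound.
-/

/-- The contamination closure on the path `{1, …, m}`: the smallest superset of
`S` closed under the rule that an interior cell `j` (with `1 < j < m`) becomes
contaminated once both its neighbours `j - 1` and `j + 1` are contaminated. -/
inductive PCont (m : ℕ) (S : Set ℕ) : ℕ → Prop where
  | init {j : ℕ} : j ∈ S → PCont m S j
  | spread {j : ℕ} : 1 < j → j < m → PCont m S (j - 1) → PCont m S (j + 1) →
      PCont m S j

namespace PCont

variable {m : ℕ} {S : Set ℕ} {j : ℕ}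

lemma mem_of_le_one (h : PCont m S j) (hj : j ≤ 1) : j ∈ S := by
  cases h with
  | init h => exact h
  | spread h1 _ _ _ => omega

lemma mem_of_le (h : PCont m S j) (hj : m ≤ j) : j ∈ S := by
  cases h with
  | init h => exact h
  | spread _ h2 _ _ => omega

lemma mem_of_gap {i : ℕ} (hi : i ∉ S) (hi1 : i + 1 ∉ S) (h : PCont m S j)
    (hj : j = i ∨ j = i + 1) : j ∈ S := by
  induction h with
  | init h => exact h
  | @spread j _ _ _ _ ihl ihr =>
    rcases hj with rfl | rfl
    · exact absurd (ihr (Or.inr rfl)) hi1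
    · exact absurd (ihl (Or.inl (Nat.add_sub_cancel i 1))) hi

end PCont

theorem pcont_all_iff {m : ℕ} (hm : 1 ≤ m) (S : Finset ℕ) :
    (∀ j ∈ Set.Icc 1 m, PCont m (↑S) j) ↔
      (1 ∈ S ∧ m ∈ S ∧ ∀ i ∈ Finset.Icc 1 m \ S, i + 1 ∉ Finset.Icc 1 m \ S) := by
  simp only [Finset.mem_sdiff, Finset.mem_Icc, Set.mem_Icc, not_and, not_not]
  constructor
  · intro H
    refine ⟨(H 1 ⟨le_rfl, hm⟩).mem_of_le_one le_rfl, (H m ⟨hm, le_rfl⟩).mem_of_le le_rfl,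
      ?_⟩
    intro i ⟨hi, hiS⟩ hi1
    by_contra hi1S
    exact hiS ((H i hi).mem_of_gap hiS hi1S (Or.inl rfl))
  · rintro ⟨h1, hmS, hgap⟩ j hj
    by_cases hjS : j ∈ S
    · exact .init hjS
    have hj1 : 1 < j := lt_of_le_of_ne hj.1 (by rintro rfl; exact hjS h1)
    have hjm : j < m := lt_of_le_of_ne hj.2 (by rintro rfl; exact hjS hmS)
    have hl : j - 1 ∈ S := by
      by_contra hl
      have := hgap (j - 1) ⟨⟨by omega, by omega⟩, hl⟩
      rw [Nat.sub_add_cancel hj.1] at this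
      exact hjS (this hj)
    have hr : j + 1 ∈ S := hgap j ⟨hj, hjS⟩ ⟨by omega, by omega⟩
    exact .spread hj1 hjm (.init hl) (.init hr)

lemma le_card_of_forall_two_mul_mem_or {S : Finset ℕ} {n : ℕ}
    (h : ∀ k < n, 2 * k ∈ S ∨ 2 * k + 1 ∈ S) : n ≤ S.card := by
  have hsub : Finset.range n ⊆ S.image (· / 2) := by
    intro k hk
    rcases h k (Finset.mem_range.1 hk) with hk | hk
    · exact Finset.mem_image.2 ⟨_, hk, by omega⟩
    · exact Finset.mem_image.2 ⟨_, hk, by omega⟩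
  calc n = (Finset.range n).card := (Finset.card_range n).symm
    _ ≤ (S.image (· / 2)).card := Finset.card_le_card hsub
    _ ≤ S.card := Finset.card_image_le

lemma le_card_of_no_adjacent_gaps {m : ℕ} {S : Finset ℕ} (h1 : 1 ∈ S) (hmS : m ∈ S)
    (hgap : ∀ i ∈ Finset.Icc 1 m \ S, i + 1 ∉ Finset.Icc 1 m \ S) :
    m / 2 + 1 ≤ S.card := by
  refine le_card_of_forall_two_mul_mem_or fun k hk => ?_
  rcases Nat.eq_zero_or_pos k with rfl | hk0
  · exact Or.inr h1
  by_cases h2k : 2 * k = m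
  · exact Or.inl (h2k ▸ hmS)
  by_contra! hk'
  exact hgap (2 * k) (by simp [hk'.1]; omega) (by simp [hk'.2]; omega)

/-- The odd cells of `{1, …, m}` together with `m`; the `min` only matters at `k = m / 2`
for even `m`. -/
def oddCover (m : ℕ) : Finset ℕ :=
  (Finset.range (m / 2 + 1)).image fun k => min (2 * k + 1) m

lemma mem_oddCover {m x : ℕ} : x ∈ oddCover m ↔ ∃ k ≤ m / 2, min (2 * k + 1) m = x := by
  simp [oddCover]

lemma card_oddCover (m : ℕ) : (oddCover m).card = m / 2 + 1 := by
  rw [oddCover, Finset.card_image_of_injOn, Finset.card_range]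
  intro a ha b hb hab
  simp only [Finset.coe_range, Set.mem_Iio] at ha hb hab
  omega

lemma oddCover_subset {m : ℕ} (hm : 1 ≤ m) : ↑(oddCover m) ⊆ Set.Icc 1 m := by
  rintro x hx
  obtain ⟨k, -, rfl⟩ := mem_oddCover.1 hx
  exact ⟨by omega, by omega⟩

lemma all_pcont_oddCover {m : ℕ} (hm : 1 ≤ m) :
    ∀ j ∈ Set.Icc 1 m, PCont m (↑(oddCover m)) j := by
  refine (pcont_all_iff hm _).2 ⟨mem_oddCover.2 ⟨0, by omega, by omega⟩,
    mem_oddCover.2 ⟨m / 2, le_rfl, by omega⟩, ?_⟩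
  intro i hi hi1
  simp only [Finset.mem_sdiff, Finset.mem_Icc, mem_oddCover, not_exists, not_and] at hi hi1
  rcases Nat.even_or_odd' i with ⟨k, rfl | rfl⟩
  · exact hi1.2 k (by omega) (by omega)
  · exact hi.2 k (by omega) (by omega)

theorem stmt_18 (m : ℕ) (hm : 1 ≤ m) :
    (∀ S : Finset ℕ, ↑S ⊆ Set.Icc 1 m →
      ((∀ j ∈ Set.Icc 1 m, PCont m (↑S) j) ↔
        (1 ∈ S ∧ m ∈ S ∧ ∀ i ∈ Finset.Icc 1 m \ S, i + 1 ∉ Finset.Icc 1 m \ S))) ∧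
    sInf {c | ∃ S : Finset ℕ, ↑S ⊆ Set.Icc 1 m ∧ S.card = c ∧
        ∀ j ∈ Set.Icc 1 m, PCont m (↑S) j} = m / 2 + 1 := by
  refine ⟨fun S _ => pcont_all_iff hm S, IsLeast.csInf_eq ⟨?_, ?_⟩⟩
  · exact ⟨oddCover m, oddCover_subset hm, card_oddCover m, all_pcont_oddCover hm⟩
  · rintro c ⟨S, -, rfl, hS⟩
    obtain ⟨h1, hmS, hgap⟩ := (pcont_all_iff hm S).1 hS
    exact le_card_of_no_adjacent_gaps h1 hmS hgap
end
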